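/- Let q ≥ 4 be even. Then in SL(2,ℝ) one has (T·S)^{q/2} = (1/sin(π/q)) · [[λ/2, −1],[1, −λ/2]]; in particular the Möbius transformation (T·S)^{q/2} is the elliptic involution x ↦ (λx − 2)/(2x − λ) fixing ρ = e^{iπ/q}. -/

import Mathlib

open Matrix Real Complex

/-!
Put `θ = π / q`, so `λ = 2 cos θ` and `T S = [[λ, -1], [1, 0]]`. The addition formula
`sin (x + θ) + sin (x - θ) = 2 cos θ sin x` gives, by induction,
`sin θ • (T S)^n = [[sin ((n+1)θ), -sin (nθ)], [sin (nθ), -sin ((n-1)θ)]]`; for `n = q / 2` we have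
`nθ = π / 2` and the right side is `[[cos θ, -1], [1, -cos θ]]`. Nonzero scalars act trivially on
Möbius transformations, and `ρ = e^{iθ}` is a root of `z² - 2 cos θ z + 1`, i.e. of the fixed-point
equation `(cos θ z - 1) / (z - cos θ) = z`.
-/

/-- The Möbius action of a real 2×2 matrix on ℝ. -/
noncomputable def moeb (A : Matrix (Fin 2) (Fin 2) ℝ) (x : ℝ) : ℝ :=
  (A 0 0 * x + A 0 1) / (A 1 0 * x + A 1 1)

/-- The Möbius action of a real 2×2 matrix on ℂ. -/
noncomputable def moebC (A : Matrix (Fin 2) (Fin 2) ℝ) (z : ℂ) : ℂ :=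
  ((A 0 0 : ℂ) * z + (A 0 1 : ℂ)) / ((A 1 0 : ℂ) * z + (A 1 1 : ℂ))

theorem moeb_smul {c : ℝ} (hc : c ≠ 0) (A : Matrix (Fin 2) (Fin 2) ℝ) (x : ℝ) :
    moeb (c • A) x = moeb A x := by
  simp only [moeb, Matrix.smul_apply, smul_eq_mul, mul_assoc, ← mul_add]
  exact mul_div_mul_left _ _ hc

theorem moebC_smul {c : ℝ} (hc : c ≠ 0) (A : Matrix (Fin 2) (Fin 2) ℝ) (z : ℂ) :
    moebC (c • A) z = moebC A z := by
  simp only [moebC, Matrix.smul_apply, smul_eq_mul, ofReal_mul, mul_assoc, ← mul_add]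
  exact mul_div_mul_left _ _ (ofReal_ne_zero.mpr hc)

theorem moeb_div_two_eq (a x : ℝ) :
    moeb !![a / 2, -1; 1, -(a / 2)] x = (a * x - 2) / (2 * x - a) := by
  rw [moeb, ← mul_div_mul_left _ _ (two_ne_zero' ℝ)]
  simp only [of_apply, cons_val', cons_val_zero, cons_val_one, empty_val', cons_val_fin_one]
  ring_nf

theorem moebC_exp_mul_I (θ : ℝ) (hs : Real.sin θ ≠ 0) :
    moebC !![Real.cos θ, -1; 1, -Real.cos θ] (Complex.exp (θ * I)) = Complex.exp (θ * I) := by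
  have hz : Complex.exp (θ * I) = Real.cos θ + Real.sin θ * I := by
    rw [exp_mul_I, ← ofReal_cos, ← ofReal_sin]
  have hden : Complex.exp (θ * I) - Real.cos θ = Real.sin θ * I := by rw [hz]; ring
  have hden0 : Complex.exp (θ * I) - Real.cos θ ≠ 0 := by
    rw [hden]; exact mul_ne_zero (ofReal_ne_zero.mpr hs) I_ne_zero
  simp only [moebC, of_apply, cons_val', cons_val_zero, cons_val_one, empty_val', cons_val_fin_one,
    ofReal_neg, ofReal_one, one_mul, ← sub_eq_add_neg]
  rw [div_eq_iff hden0, hz]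
  have h : (Real.sin θ : ℂ) ^ 2 + (Real.cos θ : ℂ) ^ 2 = 1 := by
    exact_mod_cast Real.sin_sq_add_cos_sq θ
  linear_combination -(Real.sin θ : ℂ) ^ 2 * I_sq + h

theorem T_mul_S_eq (a : ℝ) : !![1, a; 0, 1] * !![0, -1; 1, 0] = !![a, -1; 1, (0 : ℝ)] := by
  simp

theorem sin_smul_pow_eq (θ : ℝ) (n : ℕ) :
    Real.sin θ • !![2 * Real.cos θ, -1; 1, 0] ^ n =
      !![Real.sin ((n + 1) * θ), -Real.sin (n * θ); Real.sin (n * θ), -Real.sin ((n - 1) * θ)] := by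
  have chebyshev (x : ℝ) : Real.sin (x + θ) = 2 * Real.cos θ * Real.sin x - Real.sin (x - θ) := by
    rw [Real.sin_add, Real.sin_sub]; ring
  induction n with
  | zero => simp [Matrix.one_fin_two, Matrix.smul_of]
  | succ n ih =>
    rw [pow_succ, ← smul_mul_assoc, ih, Matrix.mul_fin_two]
    push_cast
    have h1 := chebyshev ((n + 1) * θ)
    have h2 := chebyshev (n * θ)
    rw [show ((n : ℝ) + 1) * θ + θ = (n + 1 + 1) * θ by ring,
      show ((n : ℝ) + 1) * θ - θ = n * θ by ring] at h1
    rw [show (n : ℝ) * θ + θ = (n + 1) * θ by ring,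
      show (n : ℝ) * θ - θ = (n - 1) * θ by ring] at h2
    rw [h1, h2]
    ext i j
    fin_cases i <;> fin_cases j <;> simp <;> ring

theorem pow_eq_of_mul_eq_pi_div_two {θ : ℝ} (hs : Real.sin θ ≠ 0) {k : ℕ}
    (hk : k * θ = π / 2) :
    !![2 * Real.cos θ, -1; 1, 0] ^ k = (Real.sin θ)⁻¹ • !![Real.cos θ, -1; 1, -Real.cos θ] := by
  rw [eq_inv_smul_iff₀ hs, sin_smul_pow_eq, add_mul, sub_mul, one_mul, hk, Real.sin_pi_div_two,
    Real.sin_pi_div_two_sub, add_comm, Real.sin_add_pi_div_two]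

/-- Let q ≥ 4 be even. Then (T·S)^{q/2} = (1/sin(π/q))·[[λ/2,−1],[1,−λ/2]];
in particular the Möbius transformation (T·S)^{q/2} is the elliptic involution
x ↦ (λx−2)/(2x−λ) fixing ρ = e^{iπ/q}. -/
theorem TS_half_power_even (q : ℕ) (hq : 4 ≤ q) (hqe : Even q)
    (lam : ℝ) (hlam : lam = 2 * Real.cos (Real.pi / q))
    (S T : Matrix (Fin 2) (Fin 2) ℝ)
    (hS : S = !![0, -1; 1, 0]) (hT : T = !![1, lam; 0, 1]) :
    (T * S) ^ (q / 2) = (Real.sin (Real.pi / q))⁻¹ • !![lam / 2, -1; 1, -(lam / 2)] ∧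
      (∀ x : ℝ, moeb ((T * S) ^ (q / 2)) x = (lam * x - 2) / (2 * x - lam)) ∧
      moebC ((T * S) ^ (q / 2)) (Complex.exp ((Real.pi / q : ℝ) * Complex.I)) =
        Complex.exp ((Real.pi / q : ℝ) * Complex.I) := by
  have hs : Real.sin (π / q) ≠ 0 := by
    have hq1 : (1 : ℝ) < q := by exact_mod_cast (by omega : 1 < q)
    exact (Real.sin_pos_of_pos_of_lt_pi (by positivity) (div_lt_self pi_pos hq1)).ne'
  have hk : ((q / 2 : ℕ) : ℝ) * (π / q) = π / 2 := by
    rw [Nat.cast_div_charZero (even_iff_two_dvd.mp hqe), Nat.cast_ofNat]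
    field_simp
  have hcos : lam / 2 = Real.cos (π / q) := by rw [hlam]; ring
  have hM : (T * S) ^ (q / 2) = (Real.sin (π / q))⁻¹ • !![lam / 2, -1; 1, -(lam / 2)] := by
    rw [hS, hT, T_mul_S_eq, hcos, hlam, pow_eq_of_mul_eq_pi_div_two hs hk]
  refine ⟨hM, fun x => ?_, ?_⟩
  · rw [hM, moeb_smul (inv_ne_zero hs), moeb_div_two_eq]
  · rw [hM, moebC_smul (inv_ne_zero hs), hcos, moebC_exp_mul_I _ hs]
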